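/- Theorem 3.3 (existence content, fixed total rent): For every ε > 0 and every real number C, every rent-division instance satisfying the standing assumptions admits a permutation π and a price vector p : Fin n → ℝ (possibly with negative entries) such that (π, p) is an ε-envy-free solution and ∑_{r} p r = C. -/

import Mathlib

/-- A function `f : ℝ → ℝ` is piecewise linear: there are finitely many
breakpoints `b 0 < … < b t` such that `f` is affine on `(-∞, b 0]`, on each
`[b i, b (i+1)]`, and on `[b t, ∞)`. -/
def PiecewiseLinear (f : ℝ → ℝ) : Prop :=
  ∃ (t : ℕ) (b : Fin (t + 1) → ℝ), StrictMono b ∧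
    (∃ m c : ℝ, ∀ x ≤ b 0, f x = m * x + c) ∧
    (∀ i : Fin t, ∃ m c : ℝ,
      ∀ x ∈ Set.Icc (b i.castSucc) (b i.succ), f x = m * x + c) ∧
    (∃ m c : ℝ, ∀ x, b (Fin.last t) ≤ x → f x = m * x + c)

/-- A solution `(π, p)` is `ε`-envy-free. -/
def EpsEF (n : ℕ) (ε : ℝ) (v : Fin n → Fin n → ℝ → ℝ)
    (π : Equiv.Perm (Fin n)) (p : Fin n → ℝ) : Prop :=
  ∀ a : Fin n,
    (0 ≤ v a (π a) (p (π a)) →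
      ∀ r, v a r (p r) ≤ (1 + ε) * v a (π a) (p (π a))) ∧
    (v a (π a) (p (π a)) < 0 →
      ∀ r, (1 + ε) * v a r (p r) ≤ v a (π a) (p (π a)))

/-!
We prove that an exactly envy-free solution exists; it is in particular `ε`-envy-free.
Among all solutions with total rent `C`, take one maximising the minimal slack
`D = min_{a,r} (v a (π a) (p (π a)) - v a r (p r))`. A maximiser exists because utilities tend
to `-∞`: once some room is very expensive, its occupant envies a room priced at most the
average more than anybody envies anything at uniform prices, so prices may be confined to a
compact set.
Among the maximisers take one with the fewest tight pairs (pairs of slack `D`), and suppose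
`D < 0`. Call `a → b` a tight edge if `a` envies the room of `b` by exactly `-D`. If these edges
contain a cycle, rotating the rooms along it raises every utility on the cycle by `-D`.
Otherwise some agent `a₀` has a tight edge but no incoming one, and some agent `b₀` has no tight
edge; moving a little rent from the room of `a₀` to the room of `b₀` relaxes the tight pairs
of `a₀` and tightens no tight pair. Either way `D` stays maximal while the number of tight
pairs drops, a contradiction.
-/

namespace Function

variable {α : Type*}

theorem exists_iterate_mem_periodicPts [Finite α] (f : α → α) (x : α) :
    ∃ m, f^[m] x ∈ periodicPts f := by
  obtain ⟨i, j, hne, heq⟩ := Finite.exists_ne_map_eq_of_infinite fun m => f^[m] x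
  wlog hij : i < j generalizing i j
  · exact this j i hne.symm heq.symm (by omega)
  refine ⟨i, mk_mem_periodicPts (n := j - i) (by omega) ?_⟩
  change f^[j - i] (f^[i] x) = f^[i] x
  rw [← iterate_add_apply, Nat.sub_add_cancel hij.le, heq]

theorem exists_perm_eqOn_periodicPts (f : α → α) :
    ∃ σ : Equiv.Perm α,
      ∀ x, (x ∈ periodicPts f → σ x = f x) ∧ (x ∉ periodicPts f → σ x = x) := by
  classical
  refine ⟨Equiv.Perm.ofSubtype ((bijOn_periodicPts f).equiv f),
    fun x => ⟨fun hx => ?_, fun hx => ?_⟩⟩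
  · rw [Equiv.Perm.ofSubtype_apply_of_mem _ hx]
    rfl
  · exact Equiv.Perm.ofSubtype_apply_of_not_mem _ hx

end Function

section Cycles

variable {ι : Type*} [Finite ι] {E : ι → ι → Prop}

theorem exists_perm_ne_one_of_forall_exists_rel (hirr : ∀ a, ¬E a a) {A : Set ι}
    (hA : A.Nonempty) (hsucc : ∀ a ∈ A, ∃ b ∈ A, E a b) :
    ∃ σ : Equiv.Perm ι, σ ≠ 1 ∧ ∀ a, σ a ≠ a → E a (σ a) := by
  classical
  choose! g hgA hgE using hsucc
  obtain ⟨g', hg'⟩ : ∃ g' : ι → ι, ∀ a, g' a = if a ∈ A then g a else a :=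
    ⟨_, fun _ => rfl⟩
  have hmaps : Set.MapsTo g' A A := fun a ha => by rw [hg', if_pos ha]; exact hgA a ha
  obtain ⟨σ, hσ⟩ := Function.exists_perm_eqOn_periodicPts g'
  have hσg : ∀ a, σ a ≠ a → a ∈ A ∧ σ a = g a := by
    intro a ha
    have hp : a ∈ Function.periodicPts g' := by_contra fun hp => ha ((hσ a).2 hp)
    have haA : a ∈ A :=
      by_contra fun haA => ha (((hσ a).1 hp).trans ((hg' a).trans (if_neg haA)))
    exact ⟨haA, ((hσ a).1 hp).trans ((hg' a).trans (if_pos haA))⟩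
  obtain ⟨a₁, ha₁⟩ := hA
  obtain ⟨m, hm⟩ := Function.exists_iterate_mem_periodicPts g' a₁
  set x := g'^[m] a₁
  have hxA : x ∈ A := hmaps.iterate m ha₁
  refine ⟨σ, fun hσ1 => ?_, fun a ha => (hσg a ha).2 ▸ hgE a (hσg a ha).1⟩
  have hx : σ x = g x := ((hσ x).1 hm).trans ((hg' x).trans (if_pos hxA))
  exact hirr x (by simpa [hσ1, ← hx] using hgE x hxA)

theorem exists_perm_rel_or_exists_source_sink (hirr : ∀ a, ¬E a a) (hE : ∃ a b, E a b) :
    (∃ σ : Equiv.Perm ι, σ ≠ 1 ∧ ∀ a, σ a ≠ a → E a (σ a)) ∨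
      ∃ a₀ b₀, (∃ b, E a₀ b) ∧ (∀ c, ¬E c a₀) ∧ ∀ b, ¬E b₀ b := by
  refine or_iff_not_imp_left.2 fun hcyc => ?_
  obtain ⟨b₀, hb₀⟩ : ∃ b₀, ∀ b, ¬E b₀ b := by
    by_contra! h
    exact hcyc (exists_perm_ne_one_of_forall_exists_rel hirr ⟨hE.choose, Set.mem_univ _⟩
      fun a _ => (h a).imp fun b hb => ⟨Set.mem_univ b, hb⟩)
  obtain ⟨a₀, ha₀, hsrc⟩ : ∃ a₀ ∈ {a | ∃ b, E a b}, ∀ c, ¬E c a₀ := by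
    by_contra! h
    obtain ⟨σ, hσ1, hσ⟩ := exists_perm_ne_one_of_forall_exists_rel (E := flip E) hirr hE
      fun a ha => (h a ha).imp fun c hc => ⟨⟨a, hc⟩, hc⟩
    refine hcyc ⟨σ⁻¹, inv_ne_one.2 hσ1, fun a ha => ?_⟩
    simpa [flip] using hσ (σ⁻¹ a) (by simpa [eq_comm] using ha)
  exact ⟨a₀, b₀, ha₀, hsrc, hb₀⟩

end Cycles

open Filter Topology Finset

theorem isCompact_setOf_sum_eq_and_le {ι : Type*} [Fintype ι] (C Z : ℝ) :
    IsCompact {p : ι → ℝ | ∑ r, p r = C ∧ ∀ r, p r ≤ Z} := by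
  refine (isCompact_Icc (a := fun _ : ι => C - (Fintype.card ι - 1) • Z)
    (b := fun _ => Z)).of_isClosed_subset ?_ ?_
  · simp only [Set.ofPred_and, Set.ofPred_forall]
    exact (isClosed_eq (continuous_finsetSum _ fun r _ => continuous_apply r)
      continuous_const).inter (isClosed_iInter fun r => isClosed_le (continuous_apply r)
      continuous_const)
  · rintro p ⟨hsum, hle⟩
    refine ⟨fun r => ?_, hle⟩
    classical
    have hsplit := add_sum_erase univ p (mem_univ r)
    have hrest := sum_le_card_nsmul (univ.erase r) p Z fun s _ => hle s
    rw [card_erase_of_mem (mem_univ r), card_univ] at hrest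
    dsimp only
    linarith

theorem PiecewiseLinear.tendsto_atBot {f : ℝ → ℝ} (hf : PiecewiseLinear f)
    (hanti : StrictAnti f) : Tendsto f atTop atBot := by
  obtain ⟨t, b, -, -, -, m, c, hlast⟩ := hf
  have hm : m < 0 := by
    have := hanti (lt_add_one (b (Fin.last t)))
    rw [hlast _ le_rfl, hlast _ (by linarith)] at this
    linarith
  refine (tendsto_atBot_add_const_right _ c (tendsto_id.const_mul_atTop_of_neg hm)).congr' ?_
  filter_upwards [eventually_ge_atTop (b (Fin.last t))] with x hx using (hlast x hx).symm

namespace RentDivision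

section Slack

variable {ι : Type*} (v : ι → ι → ℝ → ℝ)

def EnvyFree (π : Equiv.Perm ι) (p : ι → ℝ) : Prop :=
  ∀ a r, v a r (p r) ≤ v a (π a) (p (π a))

def slack (π : Equiv.Perm ι) (p : ι → ℝ) (a r : ι) : ℝ :=
  v a (π a) (p (π a)) - v a r (p r)

variable {v} {π : Equiv.Perm ι} {p p' : ι → ℝ} {a r : ι}

theorem slack_self (π : Equiv.Perm ι) (p : ι → ℝ) (a : ι) : slack v π p a (π a) = 0 :=
  sub_self _

theorem continuous_slack (hcont : ∀ a r, Continuous (v a r)) (π : Equiv.Perm ι) (a r : ι) :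
    Continuous fun p => slack v π p a r :=
  ((hcont _ _).comp (continuous_apply _)).sub ((hcont _ _).comp (continuous_apply _))

theorem slack_le_slack (hanti : ∀ a r, Antitone (v a r)) (hown : p' (π a) ≤ p (π a))
    (hr : p r ≤ p' r) : slack v π p a r ≤ slack v π p' a r := by
  have := hanti a (π a) hown
  have := hanti a r hr
  simp only [slack]
  linarith

theorem slack_lt_slack (hanti : ∀ a r, StrictAnti (v a r)) (hown : p' (π a) < p (π a))
    (hr : p r ≤ p' r) : slack v π p a r < slack v π p' a r := by
  have := hanti a (π a) hown
  have := (hanti a r).antitone hr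
  simp only [slack]
  linarith

theorem EnvyFree.epsEF {n : ℕ} {ε : ℝ} (hε : 0 ≤ ε) {v : Fin n → Fin n → ℝ → ℝ}
    {π : Equiv.Perm (Fin n)} {p : Fin n → ℝ} (h : EnvyFree v π p) : EpsEF n ε v π p :=
  fun a => ⟨fun _ r => by nlinarith [h a r], fun _ r => by nlinarith [h a r]⟩

end Slack

section MinSlack

variable {ι : Type*} [Fintype ι] [Nonempty ι] (v : ι → ι → ℝ → ℝ)

noncomputable def minSlack (π : Equiv.Perm ι) (p : ι → ℝ) : ℝ :=
  univ.inf' univ_nonempty fun t : ι × ι => slack v π p t.1 t.2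

noncomputable def tightPairs (π : Equiv.Perm ι) (p : ι → ℝ) : Finset (ι × ι) :=
  {t | slack v π p t.1 t.2 = minSlack v π p}

def Improves (π : Equiv.Perm ι) (p : ι → ℝ) (π' : Equiv.Perm ι) (p' : ι → ℝ) : Prop :=
  (∀ a r, slack v π p a r ≤ slack v π' p' a r ∨ minSlack v π p < slack v π' p' a r) ∧
    ∃ a r, slack v π p a r = minSlack v π p ∧ minSlack v π p < slack v π' p' a r

variable {v} {π π' : Equiv.Perm ι} {p p' : ι → ℝ}

theorem minSlack_le (π : Equiv.Perm ι) (p : ι → ℝ) (a r : ι) :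
    minSlack v π p ≤ slack v π p a r :=
  inf'_le _ (mem_univ (a, r))

theorem le_minSlack_iff {D : ℝ} : D ≤ minSlack v π p ↔ ∀ a r, D ≤ slack v π p a r := by
  simp [minSlack, le_inf'_iff]

theorem exists_slack_eq_minSlack (π : Equiv.Perm ι) (p : ι → ℝ) :
    ∃ a r, slack v π p a r = minSlack v π p := by
  obtain ⟨t, -, ht⟩ := exists_mem_eq_inf' (univ_nonempty (α := ι × ι))
    fun t : ι × ι => slack v π p t.1 t.2
  exact ⟨t.1, t.2, ht.symm⟩

theorem envyFree_of_minSlack_nonneg (h : 0 ≤ minSlack v π p) : EnvyFree v π p :=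
  fun a r => sub_nonneg.1 (le_minSlack_iff.1 h a r)

theorem continuous_minSlack (hcont : ∀ a r, Continuous (v a r)) (π : Equiv.Perm ι) :
    Continuous (minSlack v π) :=
  Continuous.finset_inf'_apply _ fun t _ => continuous_slack hcont π t.1 t.2

theorem minSlack_lt_of_le_price (hanti : ∀ a r, Antitone (v a r)) {γ u Z : ℝ}
    (hZ : ∀ x, Z ≤ x → ∀ a r r', v a r x < γ + v a r' u) (hpu : ∃ r, p r ≤ u)
    {r₀ : ι} (hr₀ : Z ≤ p r₀) : minSlack v π p < γ := by
  obtain ⟨r, hr⟩ := hpu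
  calc minSlack v π p ≤ slack v π p (π.symm r₀) r := minSlack_le π p _ r
    _ < γ := by
      have hhigh := hZ _ hr₀ (π.symm r₀) r₀ r
      have hlow := hanti (π.symm r₀) r hr
      simp only [slack, Equiv.apply_symm_apply]
      linarith

theorem exists_forall_minSlack_le (hcont : ∀ a r, Continuous (v a r))
    (hanti : ∀ a r, Antitone (v a r)) (hlim : ∀ a r, Tendsto (v a r) atTop atBot) (C : ℝ) :
    ∃ π p, ∑ r, p r = C ∧
      ∀ π' p', ∑ r, p' r = C → minSlack v π' p' ≤ minSlack v π p := by
  set u := C / Fintype.card ι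
  set γ := minSlack v 1 fun _ => u
  -- Any solution charging at least `Z` for some room has minimal slack below `γ`.
  obtain ⟨Z, hZ⟩ : ∃ Z, ∀ x, Z ≤ x → u ≤ x ∧ ∀ a r r', v a r x < γ + v a r' u :=
    eventually_atTop.1 <| (eventually_ge_atTop u).and <| eventually_all.2 fun a =>
      eventually_all.2 fun r => eventually_all.2 fun _ => (hlim a r).eventually_lt_atBot _
  have hsum_u : ∑ _r : ι, u = C := by
    rw [sum_const, card_univ, nsmul_eq_mul, mul_div_cancel₀ C (by positivity)]
  set K := {p : ι → ℝ | ∑ r, p r = C ∧ ∀ r, p r ≤ Z}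
  have huK : (fun _ => u) ∈ K := ⟨hsum_u, fun _ => (hZ Z le_rfl).1⟩
  choose P hPK hPmax using fun π => (isCompact_setOf_sum_eq_and_le C Z).exists_isMaxOn
    ⟨_, huK⟩ (continuous_minSlack hcont π).continuousOn
  obtain ⟨π, hπ⟩ := Finite.exists_max fun π => minSlack v π (P π)
  refine ⟨π, P π, (hPK π).1, fun π' p' hp' => ?_⟩
  by_cases hp'K : ∀ r, p' r ≤ Z
  · exact (hPmax π' ⟨hp', hp'K⟩).trans (hπ π')
  obtain ⟨r₀, hr₀⟩ := not_forall.1 hp'K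
  have hpu : ∃ r, p' r ≤ u :=
    (exists_le_of_sum_le univ_nonempty (by rw [hp', hsum_u])).imp fun _ h => h.2
  refine le_of_lt ?_
  calc minSlack v π' p' < γ :=
        minSlack_lt_of_le_price hanti (fun x hx => (hZ x hx).2) hpu (le_of_not_ge hr₀)
    _ ≤ minSlack v 1 (P 1) := hPmax 1 huK
    _ ≤ minSlack v π (P π) := hπ 1

theorem Improves.card_tightPairs_lt (h : Improves v π p π' p')
    (hmax : minSlack v π' p' ≤ minSlack v π p) :
    minSlack v π' p' = minSlack v π p ∧ #(tightPairs v π' p') < #(tightPairs v π p) := by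
  obtain ⟨hle, a₀, r₀, htight, hlt⟩ := h
  have hge : ∀ a r, minSlack v π p ≤ slack v π' p' a r := fun a r =>
    (hle a r).elim ((minSlack_le π p a r).trans ·) le_of_lt
  have heq : minSlack v π' p' = minSlack v π p := le_antisymm hmax (le_minSlack_iff.2 hge)
  have hsub : tightPairs v π' p' ⊆ tightPairs v π p := by
    intro t ht
    simp only [tightPairs, mem_filter, mem_univ, true_and, heq] at ht ⊢
    rcases hle t.1 t.2 with h | h
    · exact le_antisymm (ht ▸ h) (minSlack_le π p t.1 t.2)
    · exact absurd ht h.ne'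
  refine ⟨heq, card_lt_card ((Finset.ssubset_iff_of_subset hsub).2 ⟨(a₀, r₀), ?_, ?_⟩)⟩
  · simpa [tightPairs] using htight
  · simpa [tightPairs, heq] using hlt.ne'

theorem improves_mul_perm (hD : minSlack v π p < 0) {σ : Equiv.Perm ι} (hσ1 : σ ≠ 1)
    (htight : ∀ a, σ a ≠ a → slack v π p a (π (σ a)) = minSlack v π p) :
    Improves v π p (π * σ) p := by
  have hown : ∀ a, v a (π a) (p (π a)) ≤ v a ((π * σ) a) (p ((π * σ) a)) := by
    intro a
    by_cases ha : σ a = a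
    · simp [ha]
    · have := htight a ha
      simp only [slack] at this
      simp only [Equiv.Perm.mul_apply]
      linarith
  refine ⟨fun a r => Or.inl ?_, ?_⟩
  · simp only [slack]
    linarith [hown a]
  obtain ⟨a, ha⟩ : ∃ a, σ a ≠ a := by
    by_contra! h
    exact hσ1 (Equiv.ext h)
  refine ⟨a, π (σ a), htight a ha, ?_⟩
  rwa [← Equiv.Perm.mul_apply, slack_self]

theorem exists_improves_of_source_sink (hcont : ∀ a r, Continuous (v a r))
    (hanti : ∀ a r, StrictAnti (v a r)) {a₀ b₀ : ι} (hab : a₀ ≠ b₀)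
    (hout : ∃ r, slack v π p a₀ r = minSlack v π p)
    (hin : ∀ c, slack v π p c (π a₀) ≠ minSlack v π p)
    (hsink : ∀ r, slack v π p b₀ r ≠ minSlack v π p) :
    ∃ p', ∑ r, p' r = ∑ r, p r ∧ Improves v π p π p' := by
  classical
  set D := minSlack v π p
  set w : ι → ℝ := Pi.single (π b₀) 1 - Pi.single (π a₀) 1
  have hw_sum : ∑ r, w r = 0 := by simp [w, sum_sub_distrib]
  have hw_nonneg : ∀ r, r ≠ π a₀ → 0 ≤ w r := by
    intro r hr
    by_cases hb : r = π b₀ <;> simp [w, hr, hb, hab.symm]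
  have hw_nonpos : ∀ r, r ≠ π b₀ → w r ≤ 0 := by
    intro r hr
    by_cases ha : r = π a₀ <;> simp [w, hr, ha, hab]
  have hw_a₀ : w (π a₀) = -1 := by simp [w, π.injective.ne hab]
  have hev : ∀ᶠ δ in 𝓝[>] (0 : ℝ),
      0 < δ ∧ ∀ a r, slack v π p a r ≠ D → D < slack v π (p + δ • w) a r := by
    refine (eventually_mem_nhdsWithin (s := Set.Ioi 0)).and (nhdsWithin_le_nhds ?_)
    refine eventually_all.2 fun a => eventually_all.2 fun r => ?_
    by_cases h : slack v π p a r = D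
    · exact Eventually.of_forall fun _ h' => absurd h h'
    have hc : Continuous fun δ : ℝ => slack v π (p + δ • w) a r :=
      (continuous_slack hcont π a r).comp (by fun_prop)
    have h0 : D < slack v π (p + (0 : ℝ) • w) a r := by
      simpa using lt_of_le_of_ne (minSlack_le π p a r) (Ne.symm h)
    exact ((hc.tendsto 0).eventually (lt_mem_nhds h0)).mono fun _ h' _ => h'
  obtain ⟨δ, hδ, hfar⟩ := hev.exists
  have hprice : ∀ r, (p + δ • w) r = p r + δ * w r := fun r => rfl
  refine ⟨p + δ • w, ?_, fun a r => ?_, ?_⟩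
  · simp [hprice, sum_add_distrib, ← mul_sum, hw_sum]
  · by_cases h : slack v π p a r = D
    · have hr : r ≠ π a₀ := by rintro rfl; exact hin a h
      have ha : π a ≠ π b₀ := π.injective.ne fun hab => hsink r (hab ▸ h)
      refine Or.inl (slack_le_slack (fun a r => (hanti a r).antitone) ?_ ?_)
      · rw [hprice]; nlinarith [hw_nonpos _ ha]
      · rw [hprice]; nlinarith [hw_nonneg _ hr]
    · exact Or.inr (hfar a r h)
  · obtain ⟨r, hr⟩ := hout
    have hr' : r ≠ π a₀ := by rintro rfl; exact hin a₀ hr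
    refine ⟨a₀, r, hr, hr.symm.trans_lt (slack_lt_slack hanti ?_ ?_)⟩
    · rw [hprice, hw_a₀]; linarith
    · rw [hprice]; nlinarith [hw_nonneg _ hr']

theorem exists_improves (hcont : ∀ a r, Continuous (v a r))
    (hanti : ∀ a r, StrictAnti (v a r)) (hD : minSlack v π p < 0) :
    ∃ π' p', ∑ r, p' r = ∑ r, p r ∧ Improves v π p π' p' := by
  set E : ι → ι → Prop := fun a b => slack v π p a (π b) = minSlack v π p
  have hirr : ∀ a, ¬E a a := fun a h => by simp only [E, slack_self] at h; linarith
  have hE : ∃ a b, E a b := by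
    obtain ⟨a, r, h⟩ := exists_slack_eq_minSlack π p
    exact ⟨a, π.symm r, by simpa [E] using h⟩
  rcases exists_perm_rel_or_exists_source_sink hirr hE with
    ⟨σ, hσ1, hσ⟩ | ⟨a₀, b₀, ⟨b, hb⟩, hsrc, hsink⟩
  · exact ⟨π * σ, p, rfl, improves_mul_perm hD hσ1 hσ⟩
  · have hab : a₀ ≠ b₀ := by rintro rfl; exact hsink b hb
    obtain ⟨p', hsum, himp⟩ := exists_improves_of_source_sink hcont hanti hab ⟨_, hb⟩ hsrc
      fun r h => hsink (π.symm r) (by simpa [E] using h)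
    exact ⟨π, p', hsum, himp⟩

theorem exists_envyFree_sum_eq (hcont : ∀ a r, Continuous (v a r))
    (hanti : ∀ a r, StrictAnti (v a r)) (hlim : ∀ a r, Tendsto (v a r) atTop atBot) (C : ℝ) :
    ∃ π p, EnvyFree v π p ∧ ∑ r, p r = C := by
  obtain ⟨π₀, p₀, hsum₀, hmax⟩ :=
    exists_forall_minSlack_le hcont (fun a r => (hanti a r).antitone) hlim C
  set F : Set (Equiv.Perm ι × (ι → ℝ)) :=
    {x | ∑ r, x.2 r = C ∧ minSlack v x.1 x.2 = minSlack v π₀ p₀}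
  set x := Function.argminOn (fun x => #(tightPairs v x.1 x.2)) F ⟨(π₀, p₀), hsum₀, rfl⟩
  obtain ⟨hsum, hD⟩ : x ∈ F := Function.argminOn_mem _ _ _
  refine ⟨x.1, x.2, envyFree_of_minSlack_nonneg (not_lt.1 fun hneg => ?_), hsum⟩
  obtain ⟨π', p', hsum', himp⟩ := exists_improves hcont hanti hneg
  have hsum'C : ∑ r, p' r = C := hsum'.trans hsum
  obtain ⟨heq, hlt⟩ := himp.card_tightPairs_lt (hD ▸ hmax π' p' hsum'C)
  exact Function.not_lt_argminOn (fun x => #(tightPairs v x.1 x.2)) F (a := (π', p'))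
    ⟨hsum'C, heq.trans hD⟩ hlt

end MinSlack

end RentDivision

theorem exists_eps_envy_free_fixed_rent_general
    (n : ℕ) (hn : 0 < n) (v : Fin n → Fin n → ℝ → ℝ)
    (hcont : ∀ a r, Continuous (v a r))
    (hanti : ∀ a r, StrictAnti (v a r))
    (hpl : ∀ a r, PiecewiseLinear (v a r))
    (ε : ℝ) (hε : 0 < ε) (C : ℝ) :
    ∃ (π : Equiv.Perm (Fin n)) (p : Fin n → ℝ),
      EpsEF n ε v π p ∧ (∑ r, p r) = C := by
  have : Nonempty (Fin n) := ⟨⟨0, hn⟩⟩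
  obtain ⟨π, p, hef, hsum⟩ := RentDivision.exists_envyFree_sum_eq hcont hanti
    (fun a r => (hpl a r).tendsto_atBot (hanti a r)) C
  exact ⟨π, p, hef.epsEF hε.le, hsum⟩

/-- Theorem 3.3 (existence content): for any `ε > 0` and any total rent `C`,
under the standing assumptions there is an `ε`-envy-free solution whose
prices (possibly negative) sum to `C`. -/
theorem exists_eps_envy_free_fixed_rent
    (n : ℕ) (hn : 0 < n) (v : Fin n → Fin n → ℝ → ℝ)
    (hcont : ∀ a r, Continuous (v a r))
    (hanti : ∀ a r, StrictAnti (v a r))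
    (hpl : ∀ a r, PiecewiseLinear (v a r))
    (hnonneg : ∀ a r, 0 ≤ v a r 0)
    (ε : ℝ) (hε : 0 < ε) (C : ℝ) :
    ∃ (π : Equiv.Perm (Fin n)) (p : Fin n → ℝ),
      EpsEF n ε v π p ∧ (∑ r, p r) = C :=
  exists_eps_envy_free_fixed_rent_general n hn v hcont hanti hpl ε hε C
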